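/- arXiv:1104.0576 — 3 statements merged into one kernel-verified Lean document; each statement's English description precedes it below -/
import Mathlib

section
/- The probability mass function of a Poisson binomial distribution is unimodal: there exists an integer m* with 0 ≤ m* ≤ m such that P(ε) ≤ P(ε+1) for all 0 ≤ ε < m* and P(ε) ≥ P(ε+1) for all m* ≤ ε < m. -/
/-!
Adding one more indicator with success probability `p` turns the distribution `f` of the
current count into `g n = (1 - p) f n + p f (n - 1)` (with `f (-1) = 0`). Each increment of `g`
is then a convex combination of two consecutive increments of `f` (the very first one involves
`f 0 - 0 ≥ 0`), so if `f` increases up to a mode `M` and decreases after it, `g` increases up to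
`M` and decreases from `M + 1` on, whence `g` is unimodal with mode `M` or `M + 1`.
Induction over the indicators starting from the point mass at `0` gives the theorem.
-/

/-- The Poisson binomial probability mass function: probability that exactly `ε`
of the independent Bernoulli indicators with success probabilities `h i` equal one. -/
def poissonBinomialPMF (m : ℕ) (h : Fin m → ℝ) (ε : ℕ) : ℝ :=
  ∑ S ∈ Finset.powersetCard ε (Finset.univ : Finset (Fin m)),
    (∏ i ∈ S, h i) * ∏ i ∈ Sᶜ, (1 - h i)

open Finset

def IsUnimodal {α : Type*} [Preorder α] (f : ℕ → α) : Prop :=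
  ∃ M, (∀ n < M, f n ≤ f (n + 1)) ∧ ∀ n, M ≤ n → f (n + 1) ≤ f n

section Unimodal

variable {α : Type*} [LinearOrder α] {f : ℕ → α}

theorem isUnimodal_of_monotone_below_antitone_above (M : ℕ)
    (hbelow : ∀ n < M, f n ≤ f (n + 1)) (habove : ∀ n, M < n → f (n + 1) ≤ f n) :
    IsUnimodal f := by
  rcases le_total (f M) (f (M + 1)) with hM | hM
  · refine ⟨M + 1, fun n hn => ?_, fun n hn => habove n (by omega)⟩
    rcases Nat.lt_succ_iff_lt_or_eq.mp hn with hn | rfl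
    exacts [hbelow n hn, hM]
  · refine ⟨M, hbelow, fun n hn => ?_⟩
    rcases hn.lt_or_eq with hn | rfl
    exacts [habove n hn, hM]

theorem IsUnimodal.exists_mode_le (hf : IsUnimodal f) (m : ℕ) :
    ∃ M ≤ m, (∀ n < M, f n ≤ f (n + 1)) ∧ ∀ n, M ≤ n → n < m → f (n + 1) ≤ f n := by
  obtain ⟨M, hbelow, habove⟩ := hf
  exact ⟨min M m, min_le_right M m, fun n hn => hbelow n (lt_of_lt_of_le hn (min_le_left M m)),
    fun n hn _ => habove n (by omega)⟩

end Unimodal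

variable {R : Type*} [CommRing R] {ι : Type*} [DecidableEq ι]

def poissonBinomialPMFOn (s : Finset ι) (h : ι → R) (ε : ℕ) : R :=
  ∑ S ∈ s.powersetCard ε, (∏ i ∈ S, h i) * ∏ i ∈ s \ S, (1 - h i)

theorem poissonBinomialPMF_eq_poissonBinomialPMFOn_univ (m : ℕ) (h : Fin m → ℝ) :
    poissonBinomialPMF m h = poissonBinomialPMFOn univ h := by
  ext ε
  simp only [poissonBinomialPMF, poissonBinomialPMFOn, compl_eq_univ_sdiff]

theorem poissonBinomialPMFOn_zero (s : Finset ι) (h : ι → R) :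
    poissonBinomialPMFOn s h 0 = ∏ i ∈ s, (1 - h i) := by
  simp [poissonBinomialPMFOn]

theorem poissonBinomialPMFOn_empty_succ (h : ι → R) (n : ℕ) :
    poissonBinomialPMFOn ∅ h (n + 1) = 0 := by
  rw [poissonBinomialPMFOn, powersetCard_eq_empty.mpr (by simp), sum_empty]

theorem poissonBinomialPMFOn_insert_zero {s : Finset ι} {a : ι} (ha : a ∉ s) (h : ι → R) :
    poissonBinomialPMFOn (insert a s) h 0 = (1 - h a) * poissonBinomialPMFOn s h 0 := by
  rw [poissonBinomialPMFOn_zero, poissonBinomialPMFOn_zero, prod_insert ha]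

theorem poissonBinomialPMFOn_insert_succ {s : Finset ι} {a : ι} (ha : a ∉ s) (h : ι → R)
    (n : ℕ) :
    poissonBinomialPMFOn (insert a s) h (n + 1) =
      (1 - h a) * poissonBinomialPMFOn s h (n + 1) + h a * poissonBinomialPMFOn s h n := by
  have hnotMem : ∀ {k} S, S ∈ s.powersetCard k → a ∉ S :=
    fun S hS haS => ha ((mem_powersetCard.mp hS).1 haS)
  have hdisj : Disjoint (s.powersetCard (n + 1)) ((s.powersetCard n).image (insert a)) := by
    simp only [disjoint_left, mem_image]
    rintro _ hS ⟨T, -, rfl⟩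
    exact hnotMem _ hS (mem_insert_self a T)
  have hinj : Set.InjOn (insert a) (s.powersetCard n : Set (Finset ι)) := fun S hS T hT hST => by
    rw [← erase_insert (hnotMem S hS), hST, erase_insert (hnotMem T hT)]
  rw [poissonBinomialPMFOn, powersetCard_succ_insert ha, sum_union hdisj, sum_image hinj,
    poissonBinomialPMFOn, poissonBinomialPMFOn, mul_sum, mul_sum]
  congr 1 <;> refine sum_congr rfl fun S hS => ?_
  · rw [insert_sdiff_of_notMem _ (hnotMem S hS), prod_insert (by simp [ha])]
    ring
  · rw [insert_sdiff_insert, sdiff_insert_of_notMem ha, prod_insert (hnotMem S hS)]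
    ring

variable [LinearOrder R] [IsStrictOrderedRing R]

theorem IsUnimodal.bernoulli_conv {f g : ℕ → R} {p : R} (hf : IsUnimodal f) (hp0 : 0 ≤ p)
    (hp1 : p ≤ 1) (hf0 : 0 ≤ f 0) (hg0 : g 0 = (1 - p) * f 0)
    (hg : ∀ n, g (n + 1) = (1 - p) * f (n + 1) + p * f n) : IsUnimodal g := by
  obtain ⟨M, hbelow, habove⟩ := hf
  have hq : 0 ≤ 1 - p := sub_nonneg.mpr hp1
  refine isUnimodal_of_monotone_below_antitone_above M (fun n hn => ?_) (fun n hn => ?_)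
  · have hstep := mul_le_mul_of_nonneg_left (hbelow n hn) hq
    cases n with
    | zero => rw [hg, hg0]; linarith [mul_nonneg hp0 hf0]
    | succ k =>
      have hprev := mul_le_mul_of_nonneg_left (hbelow k (by omega)) hp0
      rw [hg, hg]; linarith
  · obtain ⟨k, rfl⟩ : ∃ k, n = k + 1 := ⟨n - 1, by omega⟩
    have hstep := mul_le_mul_of_nonneg_left (habove (k + 1) (by omega)) hq
    have hprev := mul_le_mul_of_nonneg_left (habove k (by omega)) hp0
    rw [hg, hg]; linarith

theorem isUnimodal_poissonBinomialPMFOn (s : Finset ι) {h : ι → R}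
    (hh : ∀ i ∈ s, 0 ≤ h i ∧ h i ≤ 1) : IsUnimodal (poissonBinomialPMFOn s h) := by
  induction s using Finset.induction_on with
  | empty =>
    refine ⟨0, nofun, fun n _ => ?_⟩
    cases n <;> simp [poissonBinomialPMFOn_zero, poissonBinomialPMFOn_empty_succ]
  | insert a s ha ih =>
    have hs : ∀ i ∈ s, 0 ≤ h i ∧ h i ≤ 1 := fun i hi => hh i (mem_insert_of_mem hi)
    obtain ⟨ha0, ha1⟩ := hh a (mem_insert_self a s)
    refine (ih hs).bernoulli_conv ha0 ha1 ?_ (poissonBinomialPMFOn_insert_zero ha h)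
      (poissonBinomialPMFOn_insert_succ ha h)
    rw [poissonBinomialPMFOn_zero]
    exact prod_nonneg fun i hi => sub_nonneg.mpr (hs i hi).2

theorem poissonBinomial_unimodal_general (m : ℕ) (h : Fin m → ℝ)
    (hh : ∀ i, 0 ≤ h i ∧ h i ≤ 1) :
    ∃ mstar : ℕ, mstar ≤ m ∧
      (∀ ε : ℕ, ε < mstar →
        poissonBinomialPMF m h ε ≤ poissonBinomialPMF m h (ε + 1)) ∧
      (∀ ε : ℕ, mstar ≤ ε → ε < m →
        poissonBinomialPMF m h ε ≥ poissonBinomialPMF m h (ε + 1)) := by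
  rw [poissonBinomialPMF_eq_poissonBinomialPMFOn_univ]
  exact (isUnimodal_poissonBinomialPMFOn univ fun i _ => hh i).exists_mode_le m

/-- The Poisson binomial probability mass function is unimodal. -/
theorem poissonBinomial_unimodal (m : ℕ) (hm : 1 ≤ m) (h : Fin m → ℝ)
    (hh : ∀ i, 0 ≤ h i ∧ h i ≤ 1) :
    ∃ mstar : ℕ, mstar ≤ m ∧
      (∀ ε : ℕ, ε < mstar →
        poissonBinomialPMF m h ε ≤ poissonBinomialPMF m h (ε + 1)) ∧
      (∀ ε : ℕ, mstar ≤ ε → ε < m →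
        poissonBinomialPMF m h ε ≥ poissonBinomialPMF m h (ε + 1)) :=
  poissonBinomial_unimodal_general m h hh
end

section
/- The mode of a Poisson binomial distribution is determined by its expectation: there exists an integer m* with 0 ≤ m* ≤ m maximizing P (i.e., P(m*) ≥ P(ε) for all 0 ≤ ε ≤ m) such that |m* − μ| ≤ 1, where μ = h_0 + h_1 + ⋯ + h_{m−1}. -/
open Finset Polynomial

noncomputable def bernoulliPGF (x : ℝ) : ℝ[X] := C x * X + C (1 - x)

section Binomial

variable {x : ℝ}

theorem coeff_bernoulliPGF_pow (x : ℝ) (v j : ℕ) :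
    (bernoulliPGF x ^ v).coeff j = v.choose j * x ^ j * (1 - x) ^ (v - j) := by
  have hterm : ∀ i, (C x * X) ^ i * C (1 - x) ^ (v - i) * (v.choose i : ℝ[X]) =
      C (v.choose i * x ^ i * (1 - x) ^ (v - i)) * X ^ i := fun i => by
    simp only [map_mul, map_pow, map_natCast]
    ring
  simp only [bernoulliPGF, add_pow, hterm, finsetSum_coeff, coeff_C_mul_X_pow, sum_ite_eq,
    mem_range]
  split_ifs with hj
  · rfl
  · simp [Nat.choose_eq_zero_of_lt (by omega : v < j)]

theorem coeff_bernoulliPGF_pow_nonneg (hx : x ∈ Set.Icc 0 1) (v j : ℕ) :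
    0 ≤ (bernoulliPGF x ^ v).coeff j := by
  have hx0 : 0 ≤ x := hx.1
  have hx1 : 0 ≤ 1 - x := sub_nonneg.2 hx.2
  rw [coeff_bernoulliPGF_pow]
  positivity

theorem succ_mul_coeff_bernoulliPGF_pow (x : ℝ) (v j : ℕ) :
    (j + 1) * (1 - x) * (bernoulliPGF x ^ v).coeff (j + 1) =
      (v - j) * x * (bernoulliPGF x ^ v).coeff j := by
  simp only [coeff_bernoulliPGF_pow]
  rcases lt_or_ge j v with hj | hj
  · obtain ⟨w, rfl⟩ := Nat.exists_eq_add_of_lt hj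
    have hc : ((j + w + 1).choose (j + 1) : ℝ) * (j + 1) = (j + w + 1).choose j * (w + 1) := by
      exact_mod_cast (Nat.choose_succ_right_eq (j + w + 1) j).trans (by congr 1; omega)
    rw [show j + w + 1 - j = w + 1 by omega, show j + w + 1 - (j + 1) = w by omega]
    push_cast
    linear_combination x ^ (j + 1) * (1 - x) ^ (w + 1) * hc
  · rw [Nat.choose_eq_zero_of_lt (by omega : v < j + 1)]
    rcases hj.eq_or_lt with rfl | hj
    · simp
    · simp [Nat.choose_eq_zero_of_lt hj]

theorem coeff_bernoulliPGF_pow_le_succ (hx : x ∈ Set.Ioo 0 1) {v j : ℕ}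
    (hj : (j + 1 : ℝ) ≤ v * x) :
    (bernoulliPGF x ^ v).coeff j ≤ (bernoulliPGF x ^ v).coeff (j + 1) := by
  have hrec := succ_mul_coeff_bernoulliPGF_pow x v j
  have hnn := coeff_bernoulliPGF_pow_nonneg (Set.Ioo_subset_Icc_self hx) v j
  have hpos : 0 < (j + 1) * (1 - x) := by nlinarith [hx.2]
  have hratio : (j + 1) * (1 - x) ≤ (v - j) * x := by linarith [hx.1]
  refine le_of_mul_le_mul_left ?_ hpos
  rw [hrec]
  exact mul_le_mul_of_nonneg_right hratio hnn

theorem coeff_bernoulliPGF_pow_succ_le (hx : x ∈ Set.Ioo 0 1) {v j : ℕ}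
    (hj : v * x ≤ j) :
    (bernoulliPGF x ^ v).coeff (j + 1) ≤ (bernoulliPGF x ^ v).coeff j := by
  have hrec := succ_mul_coeff_bernoulliPGF_pow x v j
  have hnn := coeff_bernoulliPGF_pow_nonneg (Set.Ioo_subset_Icc_self hx) v j
  have hpos : 0 < (j + 1) * (1 - x) := by nlinarith [hx.2]
  have hratio : (v - j) * x ≤ (j + 1) * (1 - x) := by linarith [hx.2]
  refine le_of_mul_le_mul_left ?_ hpos
  rw [hrec]
  exact mul_le_mul_of_nonneg_right hratio hnn

theorem coeff_X_pow_mul_bernoulliPGF_pow_le_succ (hx : x ∈ Set.Ioo 0 1) {u v k : ℕ}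
    (hk : (k + 1 : ℝ) ≤ u + v * x) :
    (X ^ u * bernoulliPGF x ^ v).coeff k ≤ (X ^ u * bernoulliPGF x ^ v).coeff (k + 1) := by
  rw [coeff_X_pow_mul', coeff_X_pow_mul']
  split_ifs with h₁ h₂ h₂
  · rw [show k + 1 - u = k - u + 1 by omega]
    exact coeff_bernoulliPGF_pow_le_succ hx (by push_cast [h₁]; linarith)
  · omega
  · exact coeff_bernoulliPGF_pow_nonneg (Set.Ioo_subset_Icc_self hx) v _
  · rfl

theorem coeff_X_pow_mul_bernoulliPGF_pow_succ_le (hx : x ∈ Set.Ioo 0 1) {u v k : ℕ}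
    (hk : u + v * x ≤ k) :
    (X ^ u * bernoulliPGF x ^ v).coeff (k + 1) ≤ (X ^ u * bernoulliPGF x ^ v).coeff k := by
  have huk : u ≤ k := by
    have : (u : ℝ) ≤ k := by nlinarith [hx.1]
    exact_mod_cast this
  rw [coeff_X_pow_mul', coeff_X_pow_mul', if_pos huk, if_pos (by omega),
    show k + 1 - u = k - u + 1 by omega]
  exact coeff_bernoulliPGF_pow_succ_le hx (by push_cast [huk]; linarith)

end Binomial

section PoissonBinomial

variable {ι : Type*} [Fintype ι]

noncomputable def poissonBinomialPGF (p : ι → ℝ) : ℝ[X] := ∏ i, bernoulliPGF (p i)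

theorem poissonBinomialPGF_coeff [DecidableEq ι] (p : ι → ℝ) (k : ℕ) :
    (poissonBinomialPGF p).coeff k =
      ∑ S ∈ powersetCard k univ, (∏ i ∈ S, p i) * ∏ i ∈ univ \ S, (1 - p i) := by
  have hterm : ∀ S : Finset ι, (∏ i ∈ S, C (p i) * X) * ∏ i ∈ univ \ S, C (1 - p i) =
      C ((∏ i ∈ S, p i) * ∏ i ∈ univ \ S, (1 - p i)) * X ^ #S := fun S => by
    rw [prod_mul_distrib, prod_const, ← map_prod, ← map_prod, C_mul]
    ring
  simp only [poissonBinomialPGF, bernoulliPGF, prod_add, hterm, finsetSum_coeff,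
    coeff_C_mul_X_pow, powersetCard_eq_filter, sum_filter]
  exact sum_congr rfl fun S _ => by split_ifs <;> simp_all [eq_comm]

theorem continuous_poissonBinomialPGF_coeff (k : ℕ) :
    Continuous fun p : ι → ℝ => (poissonBinomialPGF p).coeff k := by
  classical
  simp only [poissonBinomialPGF_coeff]
  fun_prop

theorem poissonBinomialPGF_eq_of_forall_eq_zero_or_one_or {p : ι → ℝ} {x : ℝ} (hx0 : x ≠ 0)
    (hx1 : x ≠ 1) (hp : ∀ i, p i = 0 ∨ p i = 1 ∨ p i = x) :
    poissonBinomialPGF p = X ^ #{i | p i = 1} * bernoulliPGF x ^ #{i | p i = x} := by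
  have hfactor : ∀ i, bernoulliPGF (p i) =
      (if p i = 1 then X else 1) * (if p i = x then bernoulliPGF x else 1) := fun i => by
    rcases hp i with h | h | h <;> simp [h, bernoulliPGF, hx1, hx0.symm, hx1.symm]
  simp only [poissonBinomialPGF, hfactor, prod_mul_distrib, prod_ite, prod_const, one_pow,
    mul_one]

theorem sum_eq_of_forall_eq_zero_or_one_or {p : ι → ℝ} {x : ℝ} (hx0 : x ≠ 0)
    (hx1 : x ≠ 1) (hp : ∀ i, p i = 0 ∨ p i = 1 ∨ p i = x) :
    ∑ i, p i = #{i | p i = 1} + #{i | p i = x} * x := by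
  have hsplit : ∀ i, p i = (if p i = 1 then 1 else 0) + (if p i = x then x else 0) := fun i => by
    rcases hp i with h | h | h <;> simp [h, hx1, hx0.symm, hx1.symm]
  rw [sum_congr rfl fun i _ => hsplit i, sum_add_distrib, sum_ite, sum_ite]
  simp

theorem exists_poissonBinomialPGF_eq_binomial {p : ι → ℝ} (hp : ∀ i, p i ∈ Set.Icc 0 1)
    (hfrac : ∀ i j, p i ∈ Set.Ioo 0 1 → p j ∈ Set.Ioo 0 1 → p i = p j) :
    ∃ u v : ℕ, ∃ x ∈ Set.Ioo (0 : ℝ) 1,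
      poissonBinomialPGF p = X ^ u * bernoulliPGF x ^ v ∧ ∑ i, p i = u + v * x := by
  obtain ⟨x, hx, hpx⟩ : ∃ x ∈ Set.Ioo (0 : ℝ) 1, ∀ i, p i ∈ Set.Ioo 0 1 → p i = x := by
    by_cases hex : ∃ i, p i ∈ Set.Ioo 0 1
    · obtain ⟨i₀, hi₀⟩ := hex
      exact ⟨p i₀, hi₀, fun i hi => hfrac i i₀ hi hi₀⟩
    · exact ⟨1 / 2, by norm_num, fun i hi => (hex ⟨i, hi⟩).elim⟩
  have hvals : ∀ i, p i = 0 ∨ p i = 1 ∨ p i = x := fun i => by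
    rcases (hp i).1.eq_or_lt with h0 | h0
    · exact Or.inl h0.symm
    rcases (hp i).2.eq_or_lt with h1 | h1
    · exact Or.inr (Or.inl h1)
    · exact Or.inr (Or.inr (hpx i ⟨h0, h1⟩))
  exact ⟨_, _, x, hx, poissonBinomialPGF_eq_of_forall_eq_zero_or_one_or hx.1.ne' hx.2.ne hvals,
    sum_eq_of_forall_eq_zero_or_one_or hx.1.ne' hx.2.ne hvals⟩

def cubeSlice (μ : ℝ) : Set (ι → ℝ) :=
  Set.univ.pi (fun _ => Set.Icc 0 1) ∩ {g | ∑ i, g i = μ}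

theorem isCompact_cubeSlice (μ : ℝ) : IsCompact (cubeSlice (ι := ι) μ) :=
  (isCompact_univ_pi fun _ => isCompact_Icc).inter_right
    (isClosed_eq (by fun_prop) continuous_const)

end PoissonBinomial

section Transfer

variable {ι : Type*} [DecidableEq ι]

def transfer (g : ι → ℝ) (i j : ι) (t : ℝ) : ι → ℝ :=
  g + Pi.single i t - Pi.single j t

variable {g : ι → ℝ} {i j : ι} (t : ℝ)

theorem transfer_apply_left (hij : i ≠ j) : transfer g i j t i = g i + t := by
  simp [transfer, hij]

theorem transfer_apply_right (hij : i ≠ j) : transfer g i j t j = g j - t := by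
  simp [transfer, hij.symm]

theorem transfer_apply_of_ne {l : ι} (hi : l ≠ i) (hj : l ≠ j) : transfer g i j t l = g l := by
  simp [transfer, hi, hj]

variable [Fintype ι]

theorem sum_transfer (F : ℝ → ℝ) (hij : i ≠ j) :
    ∑ l, F (transfer g i j t l) =
      ∑ l, F (g l) + (F (g i + t) - F (g i)) + (F (g j - t) - F (g j)) := by
  rw [add_assoc, ← sub_eq_iff_eq_add', ← sum_sub_distrib,
    Fintype.sum_eq_add i j hij fun l hl => by simp [transfer_apply_of_ne t hl.1 hl.2],
    transfer_apply_left t hij, transfer_apply_right t hij]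

theorem transfer_mem_cubeSlice {μ : ℝ} (hg : g ∈ cubeSlice μ) (hij : i ≠ j)
    (hi : g i + t ∈ Set.Icc 0 1) (hj : g j - t ∈ Set.Icc 0 1) :
    transfer g i j t ∈ cubeSlice μ := by
  refine ⟨fun l _ => ?_, ?_⟩
  · by_cases hli : l = i
    · rwa [hli, transfer_apply_left t hij]
    by_cases hlj : l = j
    · rwa [hlj, transfer_apply_right t hij]
    rw [transfer_apply_of_ne t hli hlj]
    exact hg.1 l trivial
  · have hsum : ∑ l, transfer g i j t l = ∑ l, g l := by simpa using sum_transfer t id hij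
    exact hsum.trans hg.2

theorem poissonBinomialPGF_transfer (hij : i ≠ j) : ∃ A B : ℝ[X], ∀ t,
    poissonBinomialPGF (transfer g i j t) = A + C ((g i + t) * (g j - t)) * B := by
  -- `B_x B_y = B_{x + y} + x y (X - 1) ^ 2`
  set R := ∏ l ∈ {i, j}ᶜ, bernoulliPGF (g l)
  set σ := g i + g j
  refine ⟨bernoulliPGF σ * R, (X - 1) ^ 2 * R, fun t => ?_⟩
  have hrest : ∏ l ∈ {i, j}ᶜ, bernoulliPGF (transfer g i j t l) = R :=
    prod_congr rfl fun l hl => by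
      simp only [mem_compl, mem_insert, mem_singleton, not_or] at hl
      rw [transfer_apply_of_ne t hl.1 hl.2]
  rw [poissonBinomialPGF, ← prod_mul_prod_compl {i, j}, prod_pair hij, hrest,
    transfer_apply_left t hij, transfer_apply_right t hij]
  simp only [bernoulliPGF, σ, map_add, map_sub, map_mul, map_one]
  ring

def IsAffineInTransferProduct (f : (ι → ℝ) → ℝ) : Prop :=
  ∀ g i j, i ≠ j → ∃ α β : ℝ, ∀ t, f (transfer g i j t) = α + β * ((g i + t) * (g j - t))

theorem isAffineInTransferProduct_coeff_sub (a b : ℕ) :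
    IsAffineInTransferProduct fun p : ι → ℝ =>
      (poissonBinomialPGF p).coeff a - (poissonBinomialPGF p).coeff b := by
  intro g i j hij
  obtain ⟨A, B, hAB⟩ := poissonBinomialPGF_transfer (g := g) hij
  refine ⟨A.coeff a - A.coeff b, B.coeff a - B.coeff b, fun t => ?_⟩
  simp only [hAB, coeff_add, coeff_C_mul]
  ring

end Transfer

section Extremal

theorem exists_mul_lt_of_mem_Ioo {a b : ℝ} (ha : a ∈ Set.Ioo 0 1) (hb : b ∈ Set.Ioo 0 1) :
    ∃ t, a + t ∈ Set.Icc 0 1 ∧ b - t ∈ Set.Icc 0 1 ∧ (a + t) * (b - t) < a * b := by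
  obtain ⟨ha0, ha1⟩ := ha
  obtain ⟨hb0, hb1⟩ := hb
  rcases le_or_gt (a + b) 1 with hab | hab
  · exact ⟨-a, ⟨by linarith, by linarith⟩, ⟨by linarith, by linarith⟩, by nlinarith⟩
  · exact ⟨1 - a, ⟨by linarith, by linarith⟩, ⟨by linarith, by linarith⟩, by nlinarith⟩

theorem exists_mul_gt_of_ne {a b : ℝ} (ha : a ∈ Set.Ioo 0 1) (hb : b ∈ Set.Ioo 0 1)
    (hab : a ≠ b) :
    ∃ t, a + t ∈ Set.Icc 0 1 ∧ b - t ∈ Set.Icc 0 1 ∧ a * b < (a + t) * (b - t) := by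
  obtain ⟨ha0, ha1⟩ := ha
  obtain ⟨hb0, hb1⟩ := hb
  refine ⟨(b - a) / 2, ⟨by linarith, by linarith⟩, ⟨by linarith, by linarith⟩, ?_⟩
  nlinarith [sq_pos_of_ne_zero (sub_ne_zero.2 hab)]

variable {ι : Type*} [Fintype ι] [DecidableEq ι] {f : (ι → ℝ) → ℝ} {μ : ℝ}

theorem exists_transfer_sum_sq_gt (hf : IsAffineInTransferProduct f) {g : ι → ℝ}
    (hg : g ∈ cubeSlice μ) (hmin : IsMinOn f (cubeSlice μ) g) {i j : ι}
    (hi : g i ∈ Set.Ioo 0 1) (hj : g j ∈ Set.Ioo 0 1) (hij : g i ≠ g j) :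
    ∃ g' ∈ cubeSlice μ, f g' = f g ∧ ∑ l, g l ^ 2 < ∑ l, g' l ^ 2 := by
  have hne : i ≠ j := fun h => hij (h ▸ rfl)
  obtain ⟨α, β, hαβ⟩ := hf g i j hne
  have hf0 : f g = α + β * (g i * g j) := by simpa [transfer] using hαβ 0
  obtain ⟨t₁, hi₁, hj₁, hlt⟩ := exists_mul_lt_of_mem_Ioo hi hj
  obtain ⟨t₂, hi₂, hj₂, hgt⟩ := exists_mul_gt_of_ne hi hj hij
  have h₁ := isMinOn_iff.1 hmin _ (transfer_mem_cubeSlice t₁ hg hne hi₁ hj₁)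
  have h₂ := isMinOn_iff.1 hmin _ (transfer_mem_cubeSlice t₂ hg hne hi₂ hj₂)
  rw [hf0, hαβ] at h₁ h₂
  have hβ : β = 0 := by nlinarith
  refine ⟨_, transfer_mem_cubeSlice t₁ hg hne hi₁ hj₁, by rw [hαβ, hf0, hβ]; ring, ?_⟩
  rw [sum_transfer t₁ (· ^ 2) hne]
  nlinarith

theorem exists_isMinOn_cubeSlice_fractional_eq (hcont : Continuous f)
    (hf : IsAffineInTransferProduct f) (hne : (cubeSlice (ι := ι) μ).Nonempty) :
    ∃ g ∈ cubeSlice μ, IsMinOn f (cubeSlice μ) g ∧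
      ∀ i j, g i ∈ Set.Ioo 0 1 → g j ∈ Set.Ioo 0 1 → g i = g j := by
  obtain ⟨g₀, hg₀, hmin₀⟩ := (isCompact_cubeSlice μ).exists_isMinOn hne hcont.continuousOn
  have hM : IsCompact (cubeSlice μ ∩ {g | f g = f g₀}) :=
    (isCompact_cubeSlice μ).inter_right (isClosed_eq hcont continuous_const)
  obtain ⟨g, ⟨hg, hfg⟩, hmax⟩ := hM.exists_isMaxOn ⟨g₀, hg₀, rfl⟩
    (by fun_prop : Continuous fun g : ι → ℝ => ∑ l, g l ^ 2).continuousOn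
  have hmin : IsMinOn f (cubeSlice μ) g :=
    isMinOn_iff.2 fun x hx => hfg ▸ isMinOn_iff.1 hmin₀ x hx
  refine ⟨g, hg, hmin, fun i j hi hj => by_contra fun hij => ?_⟩
  obtain ⟨g', hg', hfg', hlt⟩ := exists_transfer_sum_sq_gt hf hg hmin hi hj hij
  exact (isMaxOn_iff.1 hmax g' ⟨hg', hfg'.trans hfg⟩).not_gt hlt

theorem poissonBinomialPGF_coeff_le_of_binomial {a b : ℕ}
    (hbin : ∀ u v : ℕ, ∀ x ∈ Set.Ioo (0 : ℝ) 1, u + v * x = μ →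
      (X ^ u * bernoulliPGF x ^ v).coeff a ≤ (X ^ u * bernoulliPGF x ^ v).coeff b)
    {p : ι → ℝ} (hp : p ∈ cubeSlice μ) :
    (poissonBinomialPGF p).coeff a ≤ (poissonBinomialPGF p).coeff b := by
  obtain ⟨g, hg, hmin, hfrac⟩ := exists_isMinOn_cubeSlice_fractional_eq
    (f := fun q => (poissonBinomialPGF q).coeff b - (poissonBinomialPGF q).coeff a)
    ((continuous_poissonBinomialPGF_coeff b).sub (continuous_poissonBinomialPGF_coeff a))
    (isAffineInTransferProduct_coeff_sub b a) ⟨p, hp⟩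
  obtain ⟨u, v, x, hx, hpoly, hsum⟩ :=
    exists_poissonBinomialPGF_eq_binomial (fun i => hg.1 i trivial) hfrac
  have hgab := hbin u v x hx (hsum ▸ hg.2)
  have hgp := isMinOn_iff.1 hmin p hp
  beta_reduce at hgp
  rw [hpoly] at hgp
  linarith

theorem poissonBinomialPGF_coeff_le_coeff_succ {p : ι → ℝ} (hp : ∀ i, p i ∈ Set.Icc 0 1) {k : ℕ}
    (hk : (k + 1 : ℝ) ≤ ∑ i, p i) :
    (poissonBinomialPGF p).coeff k ≤ (poissonBinomialPGF p).coeff (k + 1) :=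
  poissonBinomialPGF_coeff_le_of_binomial
    (fun _ _ _ hx huv => coeff_X_pow_mul_bernoulliPGF_pow_le_succ hx (huv ▸ hk))
    ⟨fun i _ => hp i, rfl⟩

theorem poissonBinomialPGF_coeff_succ_le_coeff {p : ι → ℝ} (hp : ∀ i, p i ∈ Set.Icc 0 1) {k : ℕ}
    (hk : ∑ i, p i ≤ k) :
    (poissonBinomialPGF p).coeff (k + 1) ≤ (poissonBinomialPGF p).coeff k :=
  poissonBinomialPGF_coeff_le_of_binomial
    (fun _ _ _ hx huv => coeff_X_pow_mul_bernoulliPGF_pow_succ_le hx (huv ▸ hk))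
    ⟨fun i _ => hp i, rfl⟩

end Extremal

theorem exists_forall_le_of_le_succ_of_succ_le {β : Type*} [LinearOrder β] {a : ℕ → β} {p q : ℕ}
    (hqp : q ≤ p + 1) (hup : ∀ k, k + 1 ≤ p → a k ≤ a (k + 1))
    (hdown : ∀ k, q ≤ k → a (k + 1) ≤ a k) :
    ∃ n, (n = p ∨ n = q) ∧ ∀ k, a k ≤ a n := by
  have hle_p : ∀ k ≤ p, a k ≤ a p := fun k hk =>
    Nat.decreasingInduction (fun j hj ih => (hup j hj).trans ih) le_rfl hk
  have hle_q : ∀ k, q ≤ k → a k ≤ a q := fun k hk =>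
    antitoneOn_nat_Ici_of_succ_le hdown (le_refl q) hk hk
  rcases le_total (a p) (a q) with hpq | hpq
  · refine ⟨q, Or.inr rfl, fun k => ?_⟩
    rcases le_or_gt k p with hk | hk
    · exact (hle_p k hk).trans hpq
    · exact hle_q k (by omega)
  · refine ⟨p, Or.inl rfl, fun k => ?_⟩
    rcases le_or_gt k p with hk | hk
    · exact hle_p k hk
    · exact (hle_q k (by omega)).trans hpq

theorem poissonBinomialPMF_eq_coeff (m : ℕ) (h : Fin m → ℝ) (k : ℕ) :
    poissonBinomialPMF m h k = (poissonBinomialPGF h).coeff k := by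
  simp only [poissonBinomialPGF_coeff, poissonBinomialPMF, compl_eq_univ_sdiff]

theorem poissonBinomial_mode_near_expectation_general (m : ℕ) (h : Fin m → ℝ)
    (hh : ∀ i, 0 ≤ h i ∧ h i ≤ 1) :
    ∃ mstar : ℕ, mstar ≤ m ∧
      (∀ ε : ℕ, ε ≤ m → poissonBinomialPMF m h ε ≤ poissonBinomialPMF m h mstar) ∧
      |(mstar : ℝ) - ∑ i, h i| ≤ 1 := by
  set μ := ∑ i, h i
  have hμ0 : 0 ≤ μ := sum_nonneg fun i _ => (hh i).1
  have hμm : μ ≤ m := (sum_le_sum fun i _ => (hh i).2).trans (by simp)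
  obtain ⟨n, hn, hmax⟩ := exists_forall_le_of_le_succ_of_succ_le (a := poissonBinomialPMF m h)
    (Nat.ceil_le_floor_add_one μ)
    (fun k hk => by
      simp only [poissonBinomialPMF_eq_coeff]
      exact poissonBinomialPGF_coeff_le_coeff_succ hh
        (by exact_mod_cast (Nat.le_floor_iff hμ0).1 hk))
    (fun k hk => by
      simp only [poissonBinomialPMF_eq_coeff]
      exact poissonBinomialPGF_coeff_succ_le_coeff hh (Nat.ceil_le.1 hk))
  refine ⟨n, ?_, fun ε _ => hmax ε, abs_le.2 ?_⟩ <;> rcases hn with rfl | rfl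
  · exact Nat.floor_le_of_le hμm
  · exact Nat.ceil_le.2 hμm
  · constructor <;> linarith [Nat.floor_le hμ0, Nat.lt_floor_add_one μ]
  · constructor <;> linarith [Nat.le_ceil μ, Nat.ceil_lt_add_one hμ0]

/-- The mode of a Poisson binomial distribution is determined by its expectation
`μ = h 0 + ⋯ + h (m-1)`: some maximizer `mstar` of the PMF satisfies `|mstar - μ| ≤ 1`. -/
theorem poissonBinomial_mode_near_expectation (m : ℕ) (hm : 1 ≤ m) (h : Fin m → ℝ)
    (hh : ∀ i, 0 ≤ h i ∧ h i ≤ 1) :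
    ∃ mstar : ℕ, mstar ≤ m ∧
      (∀ ε : ℕ, ε ≤ m → poissonBinomialPMF m h ε ≤ poissonBinomialPMF m h mstar) ∧
      |(mstar : ℝ) - ∑ i, h i| ≤ 1 :=
  poissonBinomial_mode_near_expectation_general m h hh
end

section
/- Choice of interval size in the Hoeffding approximation: let m, n be integers with 1 ≤ m ≤ n, let h_0, …, h_{m−1} ∈ [0,1], let P be the corresponding Poisson binomial probability mass function with expectation μ = Σ_{i=0}^{m−1} h_i. If s > √(−ln(0.5·10⁻²)·2n) = √(2n·ln 200), then Σ over all integers ε with 0 ≤ ε ≤ m and |ε − μ| ≥ s of P(ε) is strictly less than 10⁻². -/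
open Finset Real

def poissonBinomialMass (m : ℕ) (h : Fin m → ℝ) (p : ℕ → Prop) [DecidablePred p] : ℝ :=
  ∑ ε ∈ (range (m + 1)).filter p, poissonBinomialPMF m h ε

lemma Real.exp_neg_le_one_sub_add_sq_div_two {t : ℝ} (ht : 0 ≤ t) :
    exp (-t) ≤ 1 - t + t ^ 2 / 2 := by
  -- `(1 - t + t²/2)(1 + t + t²/2) = 1 + t⁴/4` and `1 + t + t²/2 ≤ exp t`
  have hprod : 1 ≤ (1 - t + t ^ 2 / 2) * (1 + t + t ^ 2 / 2) := by
    nlinarith [sq_nonneg (t ^ 2)]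
  calc exp (-t) ≤ exp (-t) * ((1 - t + t ^ 2 / 2) * (1 + t + t ^ 2 / 2)) :=
        le_mul_of_one_le_right (exp_pos _).le hprod
    _ ≤ exp (-t) * ((1 - t + t ^ 2 / 2) * exp t) := by
        gcongr
        · nlinarith [sq_nonneg (t - 1)]
        · exact quadratic_le_exp_of_nonneg ht
    _ = 1 - t + t ^ 2 / 2 := by rw [mul_left_comm, ← exp_add, neg_add_cancel, exp_zero, mul_one]

lemma Finset.sum_filter_or_le {ι M : Type*} [AddCommMonoid M] [PartialOrder M]
    [IsOrderedAddMonoid M] [DecidableEq ι] (s : Finset ι) (p q : ι → Prop) [DecidablePred p]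
    [DecidablePred q] {f : ι → M} (hf : ∀ i ∈ s, 0 ≤ f i) :
    ∑ i ∈ s with p i ∨ q i, f i ≤ ∑ i ∈ s with p i, f i + ∑ i ∈ s with q i, f i := by
  rw [filter_or, ← sum_union_inter]
  exact le_add_of_nonneg_right <|
    sum_nonneg fun i hi ↦ hf i (mem_filter.1 (mem_inter.1 hi).1).1

section

variable {m : ℕ} {h : Fin m → ℝ}

lemma poissonBinomialPMF_nonneg (hh : ∀ i, 0 ≤ h i ∧ h i ≤ 1) (ε : ℕ) :
    0 ≤ poissonBinomialPMF m h ε :=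
  sum_nonneg fun _ _ ↦ mul_nonneg (prod_nonneg fun i _ ↦ (hh i).1)
    (prod_nonneg fun i _ ↦ sub_nonneg.2 (hh i).2)

lemma sum_poissonBinomialPMF_mul_pow (h : Fin m → ℝ) (y : ℝ) :
    ∑ ε ∈ range (m + 1), poissonBinomialPMF m h ε * y ^ ε = ∏ i, (h i * y + (1 - h i)) := by
  have hcard : ∀ S ∈ (univ : Finset (Finset (Fin m))), #S ∈ range (m + 1) := fun S _ ↦
    mem_range_succ_iff.2 (card_le_univ S |>.trans_eq (Fintype.card_fin m))
  rw [Fintype.prod_add, ← sum_fiberwise_of_maps_to hcard]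
  refine sum_congr rfl fun ε _ ↦ ?_
  rw [poissonBinomialPMF, sum_mul, powersetCard_eq_filter, powerset_univ]
  refine sum_congr rfl fun S hS ↦ ?_
  rw [prod_mul_distrib, prod_const, (mem_filter.1 hS).2]
  ring

lemma poissonBinomialPMF_one_sub (h : Fin m → ℝ) {ε : ℕ} (hε : ε ≤ m) :
    poissonBinomialPMF m (1 - h) (m - ε) = poissonBinomialPMF m h ε := by
  refine sum_nbij' compl compl (fun S hS ↦ ?_) (fun S hS ↦ ?_) (fun S _ ↦ compl_compl S)
    (fun S _ ↦ compl_compl S) fun S _ ↦ ?_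
  · rw [mem_powersetCard_univ] at hS ⊢
    rw [card_compl, Fintype.card_fin, hS]; omega
  · rw [mem_powersetCard_univ] at hS ⊢
    rw [card_compl, Fintype.card_fin, hS]
  · simp only [Pi.sub_apply, Pi.one_apply, sub_sub_cancel, compl_compl]
    ring

lemma prod_mul_add_one_sub_le_exp (hh : ∀ i, 0 ≤ h i ∧ h i ≤ 1) {y : ℝ} (hy : 0 ≤ y) :
    ∏ i, (h i * y + (1 - h i)) ≤ exp ((∑ i, h i) * (y - 1)) :=
  calc ∏ i, (h i * y + (1 - h i))
      ≤ ∏ i, exp (h i * (y - 1)) := prod_le_prod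
        (fun i _ ↦ add_nonneg (mul_nonneg (hh i).1 hy) (sub_nonneg.2 (hh i).2))
        (fun i _ ↦ by linarith [add_one_le_exp (h i * (y - 1))])
    _ = exp ((∑ i, h i) * (y - 1)) := by rw [sum_mul, exp_sum]

lemma poissonBinomialMass_lowerTail_le_exp (hh : ∀ i, 0 ≤ h i ∧ h i ≤ 1) {t : ℝ} (ht : 0 ≤ t)
    (s : ℝ) :
    poissonBinomialMass m h (fun ε ↦ (ε : ℝ) ≤ ∑ i, h i - s) ≤ exp (-(t * s) + m * t ^ 2 / 2) := by
  set μ := ∑ i, h i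
  have hμ : 0 ≤ μ ∧ μ ≤ m := ⟨sum_nonneg fun i _ ↦ (hh i).1,
    (sum_le_sum fun i _ ↦ (hh i).2).trans_eq (by simp)⟩
  have hweight : ∀ ε : ℕ, (ε : ℝ) ≤ μ - s → 1 ≤ exp (t * (μ - s)) * exp (-t) ^ ε := by
    intro ε hε
    rw [← exp_nat_mul, ← exp_add]
    exact one_le_exp (by nlinarith)
  have hexponent : t * (μ - s) + μ * (exp (-t) - 1) ≤ -(t * s) + m * t ^ 2 / 2 := by
    nlinarith [exp_neg_le_one_sub_add_sq_div_two ht, sq_nonneg t]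
  calc poissonBinomialMass m h (fun ε ↦ (ε : ℝ) ≤ μ - s)
      ≤ ∑ ε ∈ (range (m + 1)).filter (fun ε : ℕ ↦ (ε : ℝ) ≤ μ - s),
          exp (t * (μ - s)) * (poissonBinomialPMF m h ε * exp (-t) ^ ε) :=
        sum_le_sum fun ε hε ↦ by
          nlinarith [hweight ε (mem_filter.1 hε).2, poissonBinomialPMF_nonneg hh ε]
    _ ≤ ∑ ε ∈ range (m + 1), exp (t * (μ - s)) * (poissonBinomialPMF m h ε * exp (-t) ^ ε) :=
        sum_le_sum_of_subset_of_nonneg (filter_subset _ _) fun ε _ _ ↦ by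
          have := poissonBinomialPMF_nonneg hh ε; positivity
    _ = exp (t * (μ - s)) * ∏ i, (h i * exp (-t) + (1 - h i)) := by
        rw [← mul_sum, sum_poissonBinomialPMF_mul_pow]
    _ ≤ exp (t * (μ - s)) * exp (μ * (exp (-t) - 1)) := by
        gcongr; exact prod_mul_add_one_sub_le_exp hh (exp_pos _).le
    _ ≤ exp (-(t * s) + m * t ^ 2 / 2) := by rw [← exp_add]; exact exp_le_exp.2 hexponent

lemma poissonBinomialMass_lowerTail_le_exp_neg_sq (hh : ∀ i, 0 ≤ h i ∧ h i ≤ 1) (hm : 0 < m)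
    {s : ℝ} (hs : 0 ≤ s) :
    poissonBinomialMass m h (fun ε ↦ (ε : ℝ) ≤ ∑ i, h i - s) ≤ exp (-(s ^ 2 / (2 * m))) := by
  have hm' : (0 : ℝ) < m := Nat.cast_pos.2 hm
  convert poissonBinomialMass_lowerTail_le_exp hh (div_nonneg hs hm'.le) s using 2
  field_simp
  ring

lemma poissonBinomialMass_upperTail_eq_lowerTail_one_sub (h : Fin m → ℝ) (s : ℝ) :
    poissonBinomialMass m h (fun ε ↦ ∑ i, h i + s ≤ ε)
      = poissonBinomialMass m (1 - h) (fun ε ↦ (ε : ℝ) ≤ ∑ i, (1 - h) i - s) := by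
  rw [poissonBinomialMass, poissonBinomialMass, sum_filter, sum_filter]
  conv_rhs => rw [← sum_range_reflect]
  refine sum_congr rfl fun ε hε ↦ ?_
  have hεm : ε ≤ m := Nat.lt_succ_iff.1 (mem_range.1 hε)
  have hsum : ∑ i, (1 - h) i = m - ∑ i, h i := by simp [sum_sub_distrib]
  rw [Nat.add_sub_cancel, poissonBinomialPMF_one_sub h hεm, hsum, Nat.cast_sub hεm]
  congr 1
  exact propext ⟨fun _ ↦ by linarith, fun _ ↦ by linarith⟩

lemma poissonBinomialMass_upperTail_le_exp_neg_sq (hh : ∀ i, 0 ≤ h i ∧ h i ≤ 1) (hm : 0 < m)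
    {s : ℝ} (hs : 0 ≤ s) :
    poissonBinomialMass m h (fun ε ↦ ∑ i, h i + s ≤ ε) ≤ exp (-(s ^ 2 / (2 * m))) := by
  rw [poissonBinomialMass_upperTail_eq_lowerTail_one_sub]
  refine poissonBinomialMass_lowerTail_le_exp_neg_sq (fun i ↦ ?_) hm hs
  simp only [Pi.sub_apply, Pi.one_apply, sub_nonneg, sub_le_self_iff]
  exact (hh i).symm

lemma poissonBinomialMass_tails_le_two_mul_exp_neg_sq (hh : ∀ i, 0 ≤ h i ∧ h i ≤ 1)
    (hm : 0 < m) {s : ℝ} (hs : 0 ≤ s) :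
    poissonBinomialMass m h (fun ε ↦ s ≤ |(ε : ℝ) - ∑ i, h i|) ≤ 2 * exp (-(s ^ 2 / (2 * m))) := by
  have htails : ∀ ε : ℕ,
      s ≤ |(ε : ℝ) - ∑ i, h i| ↔ (ε : ℝ) ≤ ∑ i, h i - s ∨ ∑ i, h i + s ≤ ε := fun ε ↦ by
    rw [le_abs']
    constructor <;> rintro (h | h) <;> [left; right; left; right] <;> linarith
  rw [poissonBinomialMass, filter_congr fun ε _ ↦ htails ε, two_mul]
  exact (sum_filter_or_le _ _ _ fun ε _ ↦ poissonBinomialPMF_nonneg hh ε).trans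
    (add_le_add (poissonBinomialMass_lowerTail_le_exp_neg_sq hh hm hs)
      (poissonBinomialMass_upperTail_le_exp_neg_sq hh hm hs))

end

/-- Choice of interval size in the Hoeffding approximation: if
`s > √(-ln(0.5·10⁻²)·2n) = √(2n·ln 200)`, then the probability mass outside the
interval of radius `s` around the expectation is less than `10⁻²`. -/
theorem poissonBinomial_hoeffding_choice (m n : ℕ) (hm : 1 ≤ m) (hmn : m ≤ n)
    (h : Fin m → ℝ) (hh : ∀ i, 0 ≤ h i ∧ h i ≤ 1) (s : ℝ)
    (hs : s > Real.sqrt (2 * n * Real.log 200)) :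
    ∑ ε ∈ (Finset.range (m + 1)).filter (fun (ε : ℕ) => s ≤ |(ε : ℝ) - ∑ i, h i|),
        poissonBinomialPMF m h ε < 10 ^ (-2 : ℤ) := by
  have hm' : (0 : ℝ) < m := Nat.cast_pos.2 hm
  have hmn' : (m : ℝ) ≤ n := Nat.cast_le.2 hmn
  have hs0 : 0 < s := (sqrt_nonneg _).trans_lt hs
  have hs2 : 2 * n * log 200 < s ^ 2 := (sqrt_lt' hs0).1 hs
  have hexponent : -(s ^ 2 / (2 * m)) < -log 200 := by
    rw [neg_lt_neg_iff, lt_div_iff₀ (by positivity)]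
    nlinarith [log_pos (by norm_num : (1 : ℝ) < 200)]
  calc _ ≤ 2 * exp (-(s ^ 2 / (2 * m))) :=
        poissonBinomialMass_tails_le_two_mul_exp_neg_sq hh hm hs0.le
    _ < 2 * exp (-log 200) := by gcongr
    _ = 10 ^ (-2 : ℤ) := by rw [exp_neg, exp_log (by norm_num)]; norm_num
end
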